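/- (Approximate invariance) If the kernel is admissible with β = min_r |γ_0(r)|² > 0 and B = max_r |γ_0(r)|², then for each m ≥ 1, f ∈ L²(G), g ∈ G: Σ_{p∈{1,…,J}^m} ‖S[p]L_g f − S[p]f‖² ≤ 4·B·(1−β)^m ‖f‖². -/

import Mathlib

open scoped BigOperators
open MeasureTheory

noncomputable def conv {G : Type*} [Group G] [Fintype G] (f g : G → ℂ) : G → ℂ :=
  fun x => (Fintype.card G : ℂ)⁻¹ * ∑ y, f y * g (y⁻¹ * x)

noncomputable def nsq {G : Type*} [Fintype G] (f : G → ℂ) : ℝ :=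
  (Fintype.card G : ℝ)⁻¹ * ∑ x, Complex.normSq (f x)

noncomputable def ip {G : Type*} [Fintype G] (f g : G → ℂ) : ℂ :=
  (Fintype.card G : ℂ)⁻¹ * ∑ x, f x * (starRingEnd ℂ) (g x)

noncomputable def gwavelet {G : Type*} [Group G] {k : ℕ} (d : Fin k → ℕ)
    (π : (r : Fin k) → G →* Matrix (Fin (d r)) (Fin (d r)) ℂ)
    (γ : Fin k → ℂ) : G → ℂ :=
  fun x => ∑ r, (d r : ℂ) * γ r * Matrix.trace (π r x)

noncomputable def Upath {G : Type*} [Group G] [Fintype G] {J : ℕ}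
    (ψ : Fin J → G → ℂ) : List (Fin J) → (G → ℂ) → G → ℂ
  | [], f => f
  | j :: p, f => Upath ψ p fun x => ((‖conv (ψ j) f x‖ : ℝ) : ℂ)

noncomputable def Sop {G : Type*} [Group G] [Fintype G] {k J : ℕ} (d : Fin k → ℕ)
    (π : (r : Fin k) → G →* Matrix (Fin (d r)) (Fin (d r)) ℂ)
    (γ : Fin (J + 1) → Fin k → ℂ) (p : List (Fin J)) (f : G → ℂ) : G → ℂ :=
  conv (gwavelet d π (γ 0)) (Upath (fun j => gwavelet d π (γ j.succ)) p f)

/-! Translation commutes with every `S[p]`, because the wavelets are class functions, so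
`S[p] L_g f - S[p] f = (L_g - 1) S[p] f` has squared norm at most `4 ‖S[p] f‖²`.
By Schur orthogonality, `γ ↦ (h ↦ ψ_γ ∗ h)` is multiplicative in `γ` and the adjoint of
convolution with `ψ_γ` is convolution with `ψ_{conj γ}`. Hence
`‖ψ_γ ∗ h‖² = ∑_r |γ r|² ‖P_r h‖²` with `P_r = ψ_{δ_r} ∗ ·`, and `∑_r ‖P_r h‖² ≤ ‖h‖²`
because `∑_r P_r = ψ_1 ∗ ·` is a self-adjoint idempotent.
So the final low-pass filter costs a factor `B`, and each layer of the modulus cascade a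
factor `∑_{j ≥ 1} |γ_j r|² ≤ 1 - β`. -/

section L2

variable {G : Type*} [Fintype G]

lemma nsq_nonneg (f : G → ℂ) : 0 ≤ nsq f :=
  mul_nonneg (by positivity) (Finset.sum_nonneg fun x _ => Complex.normSq_nonneg _)

lemma ip_self (f : G → ℂ) : ip f f = nsq f := by
  simp [ip, nsq, Complex.mul_conj]

lemma re_ip_comm (f g : G → ℂ) : (ip f g).re = (ip g f).re := by
  have : ip f g = starRingEnd ℂ (ip g f) := by
    simp [ip, map_sum, mul_comm]
  rw [this, Complex.conj_re]

lemma ip_sum_mul_left {ι : Type*} (s : Finset ι) (c : ι → ℂ) (u : ι → G → ℂ) (v : G → ℂ) :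
    ip (fun x => ∑ i ∈ s, c i * u i x) v = ∑ i ∈ s, c i * ip (u i) v := by
  simp only [ip, Finset.mul_sum, Finset.sum_mul]
  rw [Finset.sum_comm]
  exact Finset.sum_congr rfl fun _ _ => Finset.sum_congr rfl fun _ _ => by ring

lemma nsq_sub (f g : G → ℂ) :
    nsq (fun x => f x - g x) = nsq f + nsq g - 2 * (ip f g).re := by
  have hre : (ip f g).re = (Fintype.card G : ℝ)⁻¹ * ∑ x, (f x * starRingEnd ℂ (g x)).re := by
    simp [ip, Complex.re_sum]
  simp only [nsq, hre, Complex.normSq_sub, Finset.sum_sub_distrib, Finset.sum_add_distrib,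
    ← Finset.mul_sum]
  ring

lemma nsq_sub_le (f g : G → ℂ) :
    nsq (fun x => f x - g x) ≤ 2 * nsq f + 2 * nsq g := by
  have hpt : ∀ x, Complex.normSq (f x - g x)
      ≤ 2 * Complex.normSq (f x) + 2 * Complex.normSq (g x) := fun x => by
    nlinarith [Complex.normSq_nonneg (f x + g x), Complex.normSq_add (f x) (g x),
      Complex.normSq_sub (f x) (g x)]
  have := mul_le_mul_of_nonneg_left (Finset.sum_le_sum fun x (_ : x ∈ Finset.univ) => hpt x)
    (by positivity : (0 : ℝ) ≤ (Fintype.card G : ℝ)⁻¹)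
  simp only [nsq, Finset.sum_add_distrib, ← Finset.mul_sum] at this ⊢
  linarith

lemma nsq_norm (f : G → ℂ) : nsq (fun x => ((‖f x‖ : ℝ) : ℂ)) = nsq f := by
  simp [nsq, Complex.normSq_eq_norm_sq]

variable [Group G]

lemma nsq_translate (f : G → ℂ) (g : G) : nsq (fun x => f (g⁻¹ * x)) = nsq f := by
  unfold nsq
  congr 1
  exact Fintype.sum_equiv (Equiv.mulLeft g⁻¹) _ _ fun _ => rfl

lemma nsq_translate_sub_le (f : G → ℂ) (g : G) :
    nsq (fun x => f (g⁻¹ * x) - f x) ≤ 4 * nsq f := by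
  have := nsq_sub_le (fun x => f (g⁻¹ * x)) f
  rw [nsq_translate] at this
  linarith

end L2

section Convolution

variable {G : Type*} [Group G] [Fintype G]

lemma conv_assoc (a b c : G → ℂ) : conv (conv a b) c = conv a (conv b c) := by
  funext x
  simp only [conv, Finset.mul_sum, Finset.sum_mul, mul_assoc]
  rw [Finset.sum_comm]
  refine Finset.sum_congr rfl fun z _ => ?_
  refine Fintype.sum_equiv (Equiv.mulLeft z⁻¹) _ _ fun y => ?_
  simp only [Equiv.coe_mulLeft, mul_inv_rev, inv_inv, mul_inv_cancel_left, mul_assoc]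
  ring

lemma conv_sum_mul_left {ι : Type*} (s : Finset ι) (c : ι → ℂ) (ψ : ι → G → ℂ)
    (u : G → ℂ) (x : G) :
    conv (fun y => ∑ i ∈ s, c i * ψ i y) u x = ∑ i ∈ s, c i * conv (ψ i) u x := by
  simp only [conv, Finset.mul_sum, Finset.sum_mul]
  rw [Finset.sum_comm]
  exact Finset.sum_congr rfl fun _ _ => Finset.sum_congr rfl fun _ _ => by ring

lemma conv_translate_of_conj_invariant {ψ : G → ℂ} (hψ : ∀ g y, ψ (g⁻¹ * y * g) = ψ y)
    (f : G → ℂ) (g x : G) :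
    conv ψ (fun y => f (g⁻¹ * y)) x = conv ψ f (g⁻¹ * x) := by
  unfold conv
  congr 1
  refine Fintype.sum_equiv (MulAut.conj g⁻¹).toEquiv _ _ fun y => ?_
  simp only [MulEquiv.toEquiv_eq_coe, MulEquiv.coe_toEquiv, MulAut.conj_apply, inv_inv, hψ]
  congr 2
  group

end Convolution

section MatrixUnits

variable {R m n : Type*} [CommSemiring R] [Fintype m] [Fintype n] [DecidableEq m]
  [DecidableEq n]

lemma mul_single_mul_apply (A : Matrix m m R) (B : Matrix n n R) (i : m) (j : n) :
    (A * Matrix.single i j (1 : R) * B) i j = A i i * B j j := by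
  simp [Matrix.mul_apply, Matrix.single, ite_and]

lemma trace_mul_trace_eq_sum (A : Matrix m m R) (B : Matrix n n R) :
    A.trace * B.trace
      = ∑ i : m, ∑ j : n,
          (A * Matrix.single i j (1 : R) * B * Matrix.single j i (1 : R)).trace := by
  simp only [Matrix.trace_mul_single, MulOpposite.op_one, one_smul, mul_single_mul_apply]
  simp only [Matrix.trace, Matrix.diag, Finset.sum_mul_sum]

end MatrixUnits

structure IsUnitaryIrrepFamily {G : Type*} [Group G] {k : ℕ} (d : Fin k → ℕ)
    (π : (r : Fin k) → G →* Matrix (Fin (d r)) (Fin (d r)) ℂ) : Prop where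
  dim_pos : ∀ r, 0 < d r
  unitary : ∀ r x, π r x ∈ Matrix.unitaryGroup (Fin (d r)) ℂ
  schur_self : ∀ (r : Fin k) (M : Matrix (Fin (d r)) (Fin (d r)) ℂ),
    (∀ x, M * π r x = π r x * M) → ∃ c : ℂ, M = c • (1 : Matrix (Fin (d r)) (Fin (d r)) ℂ)
  schur_ne : ∀ (r s : Fin k), r ≠ s → ∀ T : Matrix (Fin (d r)) (Fin (d s)) ℂ,
    (∀ x, π r x * T = T * π s x) → T = 0

section Schur

variable {G : Type*} [Group G] [Fintype G] {k : ℕ} {d : Fin k → ℕ}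
  {π : (r : Fin k) → G →* Matrix (Fin (d r)) (Fin (d r)) ℂ}

lemma sum_mul_mul_inv_intertwines (r s : Fin k) (A : Matrix (Fin (d r)) (Fin (d s)) ℂ) (g : G) :
    π r g * (∑ x, π r x * A * π s x⁻¹) = (∑ x, π r x * A * π s x⁻¹) * π s g := by
  rw [Matrix.mul_sum, Matrix.sum_mul]
  refine Fintype.sum_equiv (Equiv.mulLeft g) _ _ fun x => ?_
  simp only [Equiv.coe_mulLeft, map_mul, mul_inv_rev, Matrix.mul_assoc]
  rw [← map_mul (π s) g⁻¹ g, inv_mul_cancel, map_one, Matrix.mul_one]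

lemma sum_mul_mul_inv_eq_zero (hπ : IsUnitaryIrrepFamily d π) {r s : Fin k} (hrs : r ≠ s)
    (A : Matrix (Fin (d r)) (Fin (d s)) ℂ) :
    ∑ x, π r x * A * π s x⁻¹ = 0 :=
  hπ.schur_ne r s hrs _ (sum_mul_mul_inv_intertwines r s A)

lemma inv_card_smul_sum_mul_mul_inv (hπ : IsUnitaryIrrepFamily d π) (r : Fin k)
    (A : Matrix (Fin (d r)) (Fin (d r)) ℂ) :
    (Fintype.card G : ℂ)⁻¹ • ∑ x, π r x * A * π r x⁻¹ = (A.trace / d r) • 1 := by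
  obtain ⟨c, hc⟩ := hπ.schur_self r ((Fintype.card G : ℂ)⁻¹ • ∑ x, π r x * A * π r x⁻¹)
    fun g => by rw [Matrix.smul_mul, Matrix.mul_smul, sum_mul_mul_inv_intertwines]
  have htrace : ((Fintype.card G : ℂ)⁻¹ • ∑ x, π r x * A * π r x⁻¹).trace = A.trace := by
    have hconj : ∀ x, (π r x * A * π r x⁻¹).trace = A.trace := fun x => by
      rw [Matrix.trace_mul_cycle, ← map_mul, inv_mul_cancel, map_one, Matrix.one_mul]
    simp [Matrix.trace_sum, hconj, Finset.card_univ]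
  have hd : (d r : ℂ) ≠ 0 := by exact_mod_cast (hπ.dim_pos r).ne'
  rw [hc, Matrix.trace_smul, Matrix.trace_one, Fintype.card_fin, smul_eq_mul] at htrace
  rw [hc, ← htrace, mul_div_cancel_right₀ _ hd]

lemma conv_trace_trace (hπ : IsUnitaryIrrepFamily d π) (r s : Fin k) (x : G) :
    conv (fun y => (π r y).trace) (fun y => (π s y).trace) x
      = if r = s then (π s x).trace / d r else 0 := by
  -- Through matrix units the group average only meets `π r y * E i j * π s y⁻¹`,
  -- which Schur's lemma computes.
  have hexpand : conv (fun y => (π r y).trace) (fun y => (π s y).trace) x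
      = ∑ i : Fin (d r), ∑ j : Fin (d s),
          (((Fintype.card G : ℂ)⁻¹ • ∑ y, π r y * Matrix.single i j (1 : ℂ) * π s y⁻¹)
            * π s x * Matrix.single j i (1 : ℂ)).trace := by
    simp only [conv, trace_mul_trace_eq_sum, map_mul, Matrix.smul_mul, Matrix.sum_mul,
      Matrix.trace_smul, Matrix.trace_sum, Finset.mul_sum, smul_eq_mul]
    rw [Finset.sum_comm]
    refine Finset.sum_congr rfl fun i _ => ?_
    rw [Finset.sum_comm]
    simp only [Matrix.mul_assoc]
  rw [hexpand]
  rcases eq_or_ne r s with rfl | hrs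
  · simp only [inv_card_smul_sum_mul_mul_inv hπ, Matrix.smul_mul, Matrix.one_mul,
      Matrix.trace_smul, Matrix.trace_mul_single, MulOpposite.op_one]
    rw [Matrix.trace, Finset.sum_div]
    refine Finset.sum_congr rfl fun i _ => ?_
    rw [Fintype.sum_eq_single i fun j hj => by simp [hj.symm]]
    simp [div_eq_inv_mul]
  · simp [sum_mul_mul_inv_eq_zero hπ hrs, hrs]

end Schur

section Wavelets

variable {G : Type*} [Group G] {k : ℕ} {d : Fin k → ℕ}
  {π : (r : Fin k) → G →* Matrix (Fin (d r)) (Fin (d r)) ℂ}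

lemma gwavelet_conj_invariant (γ : Fin k → ℂ) (g y : G) :
    gwavelet d π γ (g⁻¹ * y * g) = gwavelet d π γ y := by
  refine Finset.sum_congr rfl fun r _ => ?_
  rw [map_mul, map_mul, Matrix.trace_mul_cycle, ← map_mul, mul_inv_cancel, map_one,
    Matrix.one_mul]

lemma gwavelet_eq_sum_single (c : Fin k → ℂ) (y : G) :
    gwavelet d π c y = ∑ r, c r * gwavelet d π (Pi.single r 1) y := by
  simp only [gwavelet, Pi.single_apply, mul_ite, ite_mul, mul_one, mul_zero,
    zero_mul, Finset.sum_ite_eq', Finset.mem_univ, if_true]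
  exact Finset.sum_congr rfl fun r _ => by ring

lemma gwavelet_inv (hunit : ∀ r x, π r x ∈ Matrix.unitaryGroup (Fin (d r)) ℂ)
    (γ : Fin k → ℂ) (y : G) :
    gwavelet d π γ y⁻¹ = starRingEnd ℂ (gwavelet d π (fun r => starRingEnd ℂ (γ r)) y) := by
  have htrace : ∀ r, (π r y⁻¹).trace = starRingEnd ℂ (π r y).trace := fun r => by
    have hinv : π r y⁻¹ = star (π r y) := left_inv_eq_right_inv
      (by rw [← map_mul, inv_mul_cancel, map_one]) (Matrix.mem_unitaryGroup_iff.mp (hunit r y))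
    rw [hinv, Matrix.star_eq_conjTranspose, Matrix.trace_conjTranspose]
    rfl
  simp [gwavelet, htrace]

variable [Fintype G]

lemma conv_gwavelet_gwavelet (hπ : IsUnitaryIrrepFamily d π) (γ δ : Fin k → ℂ) :
    conv (gwavelet d π γ) (gwavelet d π δ) = gwavelet d π (fun r => γ r * δ r) := by
  funext x
  have hd : ∀ r, (d r : ℂ) ≠ 0 := fun r => by exact_mod_cast (hπ.dim_pos r).ne'
  calc conv (gwavelet d π γ) (gwavelet d π δ) x
      = ∑ r, ∑ s, d r * γ r * (d s * δ s)
          * conv (fun y => (π r y).trace) (fun y => (π s y).trace) x := by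
        simp only [conv, gwavelet, Finset.sum_mul_sum]
        simp only [Finset.mul_sum]
        rw [Finset.sum_comm]
        refine Finset.sum_congr rfl fun r _ => ?_
        rw [Finset.sum_comm]
        exact Finset.sum_congr rfl fun s _ => Finset.sum_congr rfl fun y _ => by ring
    _ = gwavelet d π (fun r => γ r * δ r) x := by
        simp only [conv_trace_trace hπ, mul_ite, mul_zero, Finset.sum_ite_eq, Finset.mem_univ,
          if_true, gwavelet]
        refine Finset.sum_congr rfl fun r _ => ?_
        field_simp [hd r]

lemma ip_conv_gwavelet_left (hunit : ∀ r x, π r x ∈ Matrix.unitaryGroup (Fin (d r)) ℂ)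
    (γ : Fin k → ℂ) (u v : G → ℂ) :
    ip (conv (gwavelet d π γ) u) v
      = ip u (conv (gwavelet d π (fun r => starRingEnd ℂ (γ r))) v) := by
  have hconj : ∀ y, starRingEnd ℂ (gwavelet d π (fun r => starRingEnd ℂ (γ r)) y)
      = gwavelet d π γ y⁻¹ := fun y => by rw [gwavelet_inv hunit]
  simp only [ip, conv, map_mul, map_sum, hconj, map_inv₀, map_natCast, Finset.mul_sum,
    Finset.sum_mul]
  rw [Finset.sum_comm, eq_comm, Finset.sum_comm]
  refine Fintype.sum_equiv (Equiv.inv G) _ _ fun y => ?_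
  refine Fintype.sum_equiv (Equiv.mulLeft y⁻¹) _ _ fun x => ?_
  simp only [Equiv.inv_apply, Equiv.coe_mulLeft, inv_inv, mul_inv_cancel_left]
  ring

lemma ip_conv_gwavelet_normSq (hπ : IsUnitaryIrrepFamily d π) (γ : Fin k → ℂ) (h : G → ℂ) :
    ip (conv (gwavelet d π (fun r => (Complex.normSq (γ r) : ℂ))) h) h
      = nsq (conv (gwavelet d π γ) h) := by
  have hfactor : (fun r => (Complex.normSq (γ r) : ℂ)) = fun r => starRingEnd ℂ (γ r) * γ r :=
    funext fun r => Complex.normSq_eq_conj_mul_self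
  rw [hfactor, ← conv_gwavelet_gwavelet hπ, conv_assoc, ip_conv_gwavelet_left hπ.unitary]
  simp only [Complex.conj_conj, ip_self]

lemma conv_gwavelet_eq_sum_single (c : Fin k → ℂ) (h : G → ℂ) :
    conv (gwavelet d π c) h
      = fun x => ∑ r, c r * conv (gwavelet d π (Pi.single r 1)) h x := by
  funext x
  rw [show gwavelet d π c = _ from funext (gwavelet_eq_sum_single c), conv_sum_mul_left]

lemma nsq_conv_gwavelet_eq_sum (hπ : IsUnitaryIrrepFamily d π) (γ : Fin k → ℂ) (h : G → ℂ) :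
    nsq (conv (gwavelet d π γ) h)
      = ∑ r, Complex.normSq (γ r) * nsq (conv (gwavelet d π (Pi.single r 1)) h) := by
  have hsingle : ∀ r : Fin k,
      (fun s => (Complex.normSq (Pi.single (M := fun _ => ℂ) r 1 s) : ℂ)) = Pi.single r 1 :=
    fun r => funext fun s => by by_cases hs : s = r <;> simp [hs]
  have hproj : ∀ r, ip (conv (gwavelet d π (Pi.single r 1)) h) h
      = nsq (conv (gwavelet d π (Pi.single r 1)) h) := fun r => by
    rw [← ip_conv_gwavelet_normSq hπ, hsingle]
  have hsum := ip_conv_gwavelet_normSq hπ γ h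
  rw [conv_gwavelet_eq_sum_single, ip_sum_mul_left] at hsum
  simp only [hproj] at hsum
  exact_mod_cast hsum.symm

lemma sum_nsq_conv_gwavelet_single_le (hπ : IsUnitaryIrrepFamily d π) (h : G → ℂ) :
    ∑ r, nsq (conv (gwavelet d π (Pi.single r 1)) h) ≤ nsq h := by
  set P := conv (gwavelet d π fun _ => 1) h
  have hP : ∑ r, nsq (conv (gwavelet d π (Pi.single r 1)) h) = nsq P := by
    rw [nsq_conv_gwavelet_eq_sum hπ (fun _ => 1)]
    simp
  have hPh : (ip P h).re = nsq P := by
    simpa using congrArg Complex.re (ip_conv_gwavelet_normSq hπ (fun _ => 1) h)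
  have hdiff := nsq_sub h P
  rw [re_ip_comm, hPh] at hdiff
  linarith [nsq_nonneg (fun x => h x - P x)]

lemma sum_nsq_conv_gwavelet_le (hπ : IsUnitaryIrrepFamily d π) {ι : Type*} [Fintype ι]
    (γ : ι → Fin k → ℂ) {C : ℝ} (hC0 : 0 ≤ C) (hC : ∀ r, ∑ i, Complex.normSq (γ i r) ≤ C)
    (h : G → ℂ) :
    ∑ i, nsq (conv (gwavelet d π (γ i)) h) ≤ C * nsq h :=
  calc ∑ i, nsq (conv (gwavelet d π (γ i)) h)
      = ∑ r, (∑ i, Complex.normSq (γ i r)) * nsq (conv (gwavelet d π (Pi.single r 1)) h) := by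
        rw [Finset.sum_congr rfl fun i _ => nsq_conv_gwavelet_eq_sum hπ (γ i) h, Finset.sum_comm]
        simp only [Finset.sum_mul]
    _ ≤ ∑ r, C * nsq (conv (gwavelet d π (Pi.single r 1)) h) := by
        gcongr with r
        · exact nsq_nonneg _
        · exact hC r
    _ ≤ C * nsq h := by
        rw [← Finset.mul_sum]
        exact mul_le_mul_of_nonneg_left (sum_nsq_conv_gwavelet_single_le hπ h) hC0

lemma nsq_conv_gwavelet_le (hπ : IsUnitaryIrrepFamily d π) (γ : Fin k → ℂ) {C : ℝ}
    (hC0 : 0 ≤ C) (hC : ∀ r, Complex.normSq (γ r) ≤ C) (h : G → ℂ) :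
    nsq (conv (gwavelet d π γ) h) ≤ C * nsq h := by
  simpa using sum_nsq_conv_gwavelet_le hπ (fun _ : Unit => γ) hC0 (by simpa using hC) h

end Wavelets

section Scattering

variable {G : Type*} [Group G] [Fintype G]

lemma Upath_translate {J : ℕ} {ψ : Fin J → G → ℂ} (hψ : ∀ j g y, ψ j (g⁻¹ * y * g) = ψ j y)
    (p : List (Fin J)) (f : G → ℂ) (g x : G) :
    Upath ψ p (fun y => f (g⁻¹ * y)) x = Upath ψ p f (g⁻¹ * x) := by
  induction p generalizing f with
  | nil => rfl
  | cons j p ih =>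
    simp only [Upath, conv_translate_of_conj_invariant (hψ j)]
    exact ih fun y => ((‖conv (ψ j) f y‖ : ℝ) : ℂ)

lemma Sop_translate {k J : ℕ} (d : Fin k → ℕ)
    (π : (r : Fin k) → G →* Matrix (Fin (d r)) (Fin (d r)) ℂ) (γ : Fin (J + 1) → Fin k → ℂ)
    (p : List (Fin J)) (f : G → ℂ) (g x : G) :
    Sop d π γ p (fun y => f (g⁻¹ * y)) x = Sop d π γ p f (g⁻¹ * x) := by
  have hU := Upath_translate (fun j => gwavelet_conj_invariant (d := d) (π := π) (γ j.succ)) p f g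
  simp only [Sop, funext hU, conv_translate_of_conj_invariant (gwavelet_conj_invariant _)]

lemma sum_nsq_Upath_le {J : ℕ} (ψ : Fin J → G → ℂ) {c : ℝ} (hc : 0 ≤ c)
    (hψ : ∀ u, ∑ j, nsq (conv (ψ j) u) ≤ c * nsq u) (n : ℕ) (f : G → ℂ) :
    ∑ p : Fin n → Fin J, nsq (Upath ψ (List.ofFn p) f) ≤ c ^ n * nsq f := by
  induction n generalizing f with
  | zero => simp [Upath]
  | succ n ih =>
    calc ∑ p : Fin (n + 1) → Fin J, nsq (Upath ψ (List.ofFn p) f)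
        = ∑ j, ∑ q : Fin n → Fin J,
            nsq (Upath ψ (List.ofFn q) fun x => ((‖conv (ψ j) f x‖ : ℝ) : ℂ)) := by
          rw [← (Fin.consEquiv fun _ => Fin J).sum_comp, Fintype.sum_prod_type]
          simp [Fin.consEquiv, List.ofFn_succ, Upath]
      _ ≤ ∑ j, c ^ n * nsq (conv (ψ j) f) := by
          gcongr with j
          simpa only [nsq_norm] using ih fun x => ((‖conv (ψ j) f x‖ : ℝ) : ℂ)
      _ ≤ c ^ (n + 1) * nsq f := by
          rw [← Finset.mul_sum, pow_succ, mul_assoc]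
          exact mul_le_mul_of_nonneg_left (hψ f) (pow_nonneg hc n)

end Scattering

theorem stmt18_general {G : Type*} [Group G] [Fintype G]
    {k : ℕ} (d : Fin k → ℕ) (hdpos : ∀ r, 0 < d r)
    (π : (r : Fin k) → G →* Matrix (Fin (d r)) (Fin (d r)) ℂ)
    (hunit : ∀ r x, π r x ∈ Matrix.unitaryGroup (Fin (d r)) ℂ)
    (hirr : ∀ (r : Fin k) (M : Matrix (Fin (d r)) (Fin (d r)) ℂ),
      (∀ x, M * π r x = π r x * M) → ∃ c : ℂ, M = c • (1 : Matrix (Fin (d r)) (Fin (d r)) ℂ))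
    (hneq : ∀ (r s : Fin k), r ≠ s → ∀ T : Matrix (Fin (d r)) (Fin (d s)) ℂ,
      (∀ x, π r x * T = T * π s x) → T = 0)
    (hcard : Nat.card (ConjClasses G) = k)
    {J : ℕ} (γ : Fin (J + 1) → Fin k → ℂ)
    (hPar : ∀ r : Fin k, ∑ j : Fin (J + 1), Complex.normSq (γ j r) = 1)
    (β B : ℝ) (hβ : ∀ r : Fin k, β ≤ Complex.normSq (γ 0 r))
    (hB : ∀ r : Fin k, Complex.normSq (γ 0 r) ≤ B)
    (f : G → ℂ) (g : G) (m : ℕ) :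
    ∑ p : Fin (m + 1) → Fin J,
        nsq (fun x => Sop d π γ (List.ofFn p) (fun y => f (g⁻¹ * y)) x
          - Sop d π γ (List.ofFn p) f x)
      ≤ 4 * B * (1 - β) ^ (m + 1) * nsq f := by
  have hπ : IsUnitaryIrrepFamily d π := ⟨hdpos, hunit, hirr, hneq⟩
  have r₀ : Fin k := ⟨0, hcard ▸ Nat.card_pos⟩
  have hB0 : 0 ≤ B := (Complex.normSq_nonneg _).trans (hB r₀)
  have hhighpass : ∀ r, ∑ j : Fin J, Complex.normSq (γ j.succ r) ≤ 1 - β := fun r => by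
    linarith [hPar r ▸ Fin.sum_univ_succ (fun j => Complex.normSq (γ j r)), hβ r]
  have hcompl : 0 ≤ 1 - β :=
    (Finset.sum_nonneg fun j _ => Complex.normSq_nonneg _).trans (hhighpass r₀)
  calc ∑ p : Fin (m + 1) → Fin J,
        nsq (fun x => Sop d π γ (List.ofFn p) (fun y => f (g⁻¹ * y)) x
          - Sop d π γ (List.ofFn p) f x)
      ≤ ∑ p : Fin (m + 1) → Fin J, 4 * (B * nsq (Upath (fun j => gwavelet d π (γ j.succ))
          (List.ofFn p) f)) := by
        gcongr with p
        simp only [Sop_translate]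
        refine (nsq_translate_sub_le _ g).trans ?_
        gcongr
        exact nsq_conv_gwavelet_le hπ (γ 0) hB0 hB _
    _ ≤ 4 * B * ((1 - β) ^ (m + 1) * nsq f) := by
        simp only [← Finset.mul_sum, mul_assoc]
        gcongr
        exact sum_nsq_Upath_le _ hcompl (sum_nsq_conv_gwavelet_le hπ _ hcompl hhighpass) _ f
    _ = 4 * B * (1 - β) ^ (m + 1) * nsq f := by ring

theorem stmt18 {G : Type*} [Group G] [Fintype G]
    {k : ℕ} (d : Fin k → ℕ) (hdpos : ∀ r, 0 < d r)
    (π : (r : Fin k) → G →* Matrix (Fin (d r)) (Fin (d r)) ℂ)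
    (hunit : ∀ r x, π r x ∈ Matrix.unitaryGroup (Fin (d r)) ℂ)
    (hirr : ∀ (r : Fin k) (M : Matrix (Fin (d r)) (Fin (d r)) ℂ),
      (∀ x, M * π r x = π r x * M) → ∃ c : ℂ, M = c • (1 : Matrix (Fin (d r)) (Fin (d r)) ℂ))
    (hneq : ∀ (r s : Fin k), r ≠ s → ∀ T : Matrix (Fin (d r)) (Fin (d s)) ℂ,
      (∀ x, π r x * T = T * π s x) → T = 0)
    (hcard : Nat.card (ConjClasses G) = k)
    {J : ℕ} (γ : Fin (J + 1) → Fin k → ℂ)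
    (hPar : ∀ r : Fin k, ∑ j : Fin (J + 1), Complex.normSq (γ j r) = 1)
    (β B : ℝ) (hβpos : 0 < β) (hβ : ∀ r : Fin k, β ≤ Complex.normSq (γ 0 r))
    (hB : ∀ r : Fin k, Complex.normSq (γ 0 r) ≤ B)
    (f : G → ℂ) (g : G) (m : ℕ) :
    ∑ p : Fin (m + 1) → Fin J,
        nsq (fun x => Sop d π γ (List.ofFn p) (fun y => f (g⁻¹ * y)) x
          - Sop d π γ (List.ofFn p) f x)
      ≤ 4 * B * (1 - β) ^ (m + 1) * nsq f :=
  stmt18_general d hdpos π hunit hirr hneq hcard γ hPar β B hβ hB f g m
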